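/- Every YES-instance (D,F,K,T) of SMD-SPP has a solution path cover whose union contains at most 2^{|K|} + |K| distinct vertices. -/

import Mathlib

open Relation

variable {V : Type*} [DecidableEq V]

/-- The adjacency relation of a digraph given by its edge set. -/
def Adj (E : Finset (V × V)) : V → V → Prop := fun a b => (a, b) ∈ E

/-- `D` is a digraph: no self-loops (no parallel edges since edges form a set). -/
def IsDigraph (D : Finset (V × V)) : Prop := ∀ e ∈ D, e.1 ≠ e.2

/-- `l` is a directed `s`-`t`-path w.r.t. the adjacency relation `A`:
a nonempty duplicate-free list of vertices, consecutive ones adjacent,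
starting at `s` and ending at `t`. -/
def DiPath (A : V → V → Prop) (s t : V) (l : List V) : Prop :=
  l.Chain' A ∧ l.Nodup ∧ l.head? = some s ∧ l.getLast? = some t

/-- Adjacency in the transitive closure `T(D)` of the digraph with edge set `E`:
`(u,v)` is an edge iff `u ≠ v` and `v` is reachable from `u` in `E`. -/
def TCAdj (E : Finset (V × V)) (u v : V) : Prop :=
  u ≠ v ∧ Relation.ReflTransGen (Adj E) u v

/-- The outdegree of `v` in the digraph with edge set `H`. -/
def outDeg (H : Finset (V × V)) (v : V) : ℕ :=
  (H.filter fun e => e.1 = v).card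

/-- The list of (directed) edges traversed by a list of vertices. -/
def listEdges (l : List V) : List (V × V) := l.zip l.tail

/-- `H` is a solution graph of the SMD-SPP instance `(D,F,K,T)`: a subgraph of
`T(D)` such that every vertex outside the flexible set `F` has outdegree at
most `T`, and every routed commodity `(s,t,P) ∈ K` has a directed `s`-`t`-path
in `H ∩ T(P)`. -/
def SMDSolution (D : Finset (V × V)) (F : Finset V) (K : Finset (V × V × List V))
    (T : ℕ) (H : Finset (V × V)) : Prop :=
  (∀ e ∈ H, TCAdj D e.1 e.2) ∧ (∀ v, v ∉ F → outDeg H v ≤ T) ∧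
  (∀ k ∈ K, ∃ l, DiPath (Adj H) k.1 k.2.1 l ∧ l.Sublist k.2.2)

/-- The routed commodities in `K` are valid: for `(s,t,P) ∈ K`,
`P` is a directed `s`-`t`-path in `D`. -/
def ValidSPP (D : Finset (V × V)) (K : Finset (V × V × List V)) : Prop :=
  ∀ k ∈ K, DiPath (Adj D) k.1 k.2.1 k.2.2

/-!
Among all solution path covers choose one of minimum total length; the witness paths of any
solution graph form one. Suppose two distinct edges `(a, b)` and `(a', b')` of its union were
used by exactly the same commodities. Every such path contains both edges, and shortcutting it
from `a` straight to `b'` or from `a'` straight to `b` (whichever comes first) keeps it a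
witness path, strictly shorter. Since an edge of a path without repeated vertices is determined
by either of its endpoints, both old edges leave the union, while only out-edges at `a` and `a'`
are added: no outdegree grows, contradicting minimality. So the edges of the union inject into
the nonempty subsets of `K`, and each vertex of the union is a source of a commodity or the
head of an edge, giving at most `|K| + 2^|K| - 1` vertices.
-/

section Paths

open List

variable {α : Type*}

@[simp]
theorem listEdges_nil : listEdges ([] : List α) = [] := rfl

@[simp]
theorem listEdges_singleton (x : α) : listEdges [x] = [] := rfl

@[simp]
theorem listEdges_cons_cons (x y : α) (l : List α) :
    listEdges (x :: y :: l) = (x, y) :: listEdges (y :: l) := rfl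

theorem listEdges_append_cons (l₁ : List α) (x : α) (l₂ : List α) :
    listEdges (l₁ ++ x :: l₂) = listEdges (l₁ ++ [x]) ++ listEdges (x :: l₂) := by
  induction l₁ using twoStepInduction with
  | nil => rfl
  | singleton u => rfl
  | cons_cons u w l₁ _ ih => simpa using ih w

theorem mem_of_mem_listEdges {l : List α} {x y : α} (h : (x, y) ∈ listEdges l) :
    x ∈ l ∧ y ∈ l.tail :=
  of_mem_zip h

theorem pair_sublist_of_mem_listEdges {l : List α} {x y : α} (h : (x, y) ∈ listEdges l) :
    [x, y] <+ l := by
  induction l using twoStepInduction with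
  | nil | singleton => simp at h
  | cons_cons u w l _ ih =>
    rcases mem_cons.1 h with h | h
    · simp_all
    · exact (ih w h).cons u

theorem isChain_iff_forall_mem_listEdges {R : α → α → Prop} {l : List α} :
    l.IsChain R ↔ ∀ e ∈ listEdges l, R e.1 e.2 := by
  induction l using twoStepInduction with
  | nil | singleton => simp
  | cons_cons u w l _ ih => simp [isChain_cons_cons, ih]

theorem exists_mem_listEdges_of_ne_head {l : List α} {v : α} (hv : v ∈ l)
    (hne : l.head? ≠ some v) : ∃ u, (u, v) ∈ listEdges l := by
  induction l using twoStepInduction with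
  | nil => simp at hv
  | singleton u => simp_all
  | cons_cons u w l _ ih =>
    by_cases hw : w = v
    · exact ⟨u, by simp [hw]⟩
    · obtain ⟨x, hx⟩ := ih w (by grind) (by simpa using hw)
      exact ⟨x, mem_cons_of_mem _ hx⟩

theorem List.Nodup.snd_eq_of_mem_listEdges {l : List α} (hl : l.Nodup) {x y y' : α}
    (h : (x, y) ∈ listEdges l) (h' : (x, y') ∈ listEdges l) : y = y' := by
  induction l using twoStepInduction with
  | nil | singleton => simp at h
  | cons_cons u w l _ ih =>
    have hu : u ∉ w :: l := (nodup_cons.1 hl).1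
    simp only [listEdges_cons_cons, mem_cons, Prod.mk.injEq] at h h'
    rcases h with ⟨rfl, rfl⟩ | h <;> rcases h' with ⟨hx, rfl⟩ | h'
    · rfl
    · exact absurd (mem_of_mem_listEdges h').1 hu
    · exact absurd (mem_of_mem_listEdges h).1 (hx ▸ hu)
    · exact ih w hl.of_cons h h'

theorem List.Nodup.fst_eq_of_mem_listEdges {l : List α} (hl : l.Nodup) {x x' y : α}
    (h : (x, y) ∈ listEdges l) (h' : (x', y) ∈ listEdges l) : x = x' := by
  induction l using twoStepInduction with
  | nil | singleton => simp at h
  | cons_cons u w l _ ih =>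
    have hw : w ∉ l := (nodup_cons.1 hl.of_cons).1
    simp only [listEdges_cons_cons, mem_cons, Prod.mk.injEq] at h h'
    rcases h with ⟨rfl, rfl⟩ | h <;> rcases h' with ⟨rfl, hy⟩ | h'
    · rfl
    · exact absurd (mem_of_mem_listEdges h').2 hw
    · exact absurd (mem_of_mem_listEdges h).2 (hy ▸ hw)
    · exact ih w hl.of_cons h h'

theorem pair_sublist_or_of_mem_listEdges {l : List α} {a b a' b' : α}
    (h : (a, b) ∈ listEdges l) (h' : (a', b') ∈ listEdges l) (hne : (a, b) ≠ (a', b')) :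
    [a, b'] <+ l ∨ [a', b] <+ l := by
  induction l using twoStepInduction with
  | nil | singleton => simp at h
  | cons_cons u w l _ ih =>
    simp only [listEdges_cons_cons, mem_cons, Prod.mk.injEq] at h h'
    rcases h with ⟨rfl, rfl⟩ | h <;> rcases h' with ⟨rfl, rfl⟩ | h'
    · exact absurd rfl hne
    · exact Or.inl (((singleton_sublist.2 (mem_of_mem_listEdges h').2).cons _).cons_cons _)
    · exact Or.inr (((singleton_sublist.2 (mem_of_mem_listEdges h).2).cons _).cons_cons _)
    · exact (ih w h h').imp (·.cons u) (·.cons u)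

theorem exists_shortcut_of_pair_sublist {l : List α} {x y : α} (h : [x, y] <+ l) :
    ∃ l', l' <+ l ∧ l'.head? = l.head? ∧ l'.getLast? = l.getLast? ∧ (x, y) ∈ listEdges l' ∧
      ∀ e ∈ listEdges l', e ∈ listEdges l ∨ e = (x, y) := by
  obtain ⟨r₁, r₂, rfl, hx, hy⟩ := cons_sublist_iff.1 h
  obtain ⟨p, m, rfl⟩ := append_of_mem hx
  obtain ⟨n, s, rfl⟩ := append_of_mem (singleton_sublist.1 hy)
  have hl : p ++ x :: m ++ (n ++ y :: s) = p ++ x :: (m ++ n ++ y :: s) := by simp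
  have hmid := listEdges_append_cons (x :: (m ++ n)) y s
  simp only [cons_append] at hmid
  refine ⟨p ++ x :: y :: s, by simp, by simp [head?_append], ?_, ?_, ?_⟩
  · simp [getLast?_cons]
  · rw [listEdges_append_cons p x]
    simp
  · intro e he
    rw [listEdges_append_cons p x, listEdges_cons_cons, mem_append, mem_cons] at he
    rw [hl, listEdges_append_cons p x, hmid, mem_append, mem_append]
    tauto

theorem List.Nodup.exists_redirect_of_pair_sublist {l : List α} (hl : l.Nodup) {a b a' b' : α}
    (h : (a, b) ∈ listEdges l) (h' : (a', b') ∈ listEdges l) (hne : (a, b) ≠ (a', b'))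
    (hs : [a, b'] <+ l) :
    ∃ l', l' <+ l ∧ l'.head? = l.head? ∧ l'.getLast? = l.getLast? ∧ l'.length < l.length ∧
      ∀ e ∈ listEdges l', e ≠ (a, b) ∧ e ≠ (a', b') ∧ (e ∈ listEdges l ∨ e = (a, b')) := by
  obtain ⟨l', hsub, hhead, hlast, hnew, hedges⟩ := exists_shortcut_of_pair_sublist hs
  have hl' := hsub.nodup hl
  have hab : (a, b) ∉ listEdges l' := fun hab => hne <| by
    obtain rfl := hl'.snd_eq_of_mem_listEdges hab hnew
    rw [hl.fst_eq_of_mem_listEdges h h']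
  have hab' : (a', b') ∉ listEdges l' := fun hab' => hne <| by
    obtain rfl := hl'.fst_eq_of_mem_listEdges hab' hnew
    rw [hl.snd_eq_of_mem_listEdges h h']
  have hlen : l'.length < l.length :=
    lt_of_le_of_ne hsub.length_le fun hlen => hab (hsub.eq_of_length hlen ▸ h)
  exact ⟨l', hsub, hhead, hlast, hlen, fun e he =>
    ⟨ne_of_mem_of_not_mem he hab, ne_of_mem_of_not_mem he hab', hedges e he⟩⟩

theorem List.Nodup.exists_redirect {l : List α} (hl : l.Nodup) {a b a' b' : α}
    (h : (a, b) ∈ listEdges l) (h' : (a', b') ∈ listEdges l) (hne : (a, b) ≠ (a', b')) :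
    ∃ l', l' <+ l ∧ l'.head? = l.head? ∧ l'.getLast? = l.getLast? ∧ l'.length < l.length ∧
      ∀ e ∈ listEdges l', e ≠ (a, b) ∧ e ≠ (a', b') ∧
        (e ∈ listEdges l ∨ e = (a, b') ∨ e = (a', b)) := by
  rcases pair_sublist_or_of_mem_listEdges h h' hne with hs | hs
  · obtain ⟨l', hsub, hhead, hlast, hlen, hedges⟩ :=
      hl.exists_redirect_of_pair_sublist h h' hne hs
    exact ⟨l', hsub, hhead, hlast, hlen, fun e he => by have := hedges e he; tauto⟩
  · obtain ⟨l', hsub, hhead, hlast, hlen, hedges⟩ :=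
      hl.exists_redirect_of_pair_sublist h' h hne.symm hs
    exact ⟨l', hsub, hhead, hlast, hlen, fun e he => by have := hedges e he; tauto⟩

theorem tcAdj_of_pair_sublist {D : Finset (α × α)} {s t x y : α} {P : List α}
    (hP : DiPath (Adj D) s t P) (h : [x, y].Sublist P) : TCAdj D x y := by
  have hchain : P.IsChain (ReflTransGen (Adj D)) := IsChain.imp (fun _ _ => .single) hP.1
  exact ⟨by simpa using h.nodup hP.2.1, pairwise_pair.1 (hchain.pairwise.sublist h)⟩

def IsWitnessFamily (K : Finset (α × α × List α)) (Q : α × α × List α → List α) : Prop :=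
  ∀ k ∈ K, (Q k).Sublist k.2.2 ∧ (Q k).head? = some k.1 ∧ (Q k).getLast? = some k.2.1

theorem IsWitnessFamily.of_sublist {K : Finset (α × α × List α)} {Q R : α × α × List α → List α}
    (hQ : IsWitnessFamily K Q) (hR : ∀ k ∈ K, (R k).Sublist (Q k) ∧
      (R k).head? = (Q k).head? ∧ (R k).getLast? = (Q k).getLast?) :
    IsWitnessFamily K R := fun k hk =>
  have ⟨hsub, hhead, hlast⟩ := hR k hk
  ⟨hsub.trans (hQ k hk).1, hhead.trans (hQ k hk).2.1, hlast.trans (hQ k hk).2.2⟩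

def totalLength (K : Finset (α × α × List α)) (Q : α × α × List α → List α) : ℕ :=
  ∑ k ∈ K, (Q k).length

end Paths

theorem outDeg_mono {H H' : Finset (V × V)} (h : H ⊆ H') (v : V) : outDeg H v ≤ outDeg H' v :=
  Finset.card_le_card (Finset.filter_subset_filter _ h)

theorem outDeg_insert_le (e : V × V) (H : Finset (V × V)) (v : V) :
    outDeg (insert e H) v ≤ outDeg H v + if e.1 = v then 1 else 0 := by
  unfold outDeg
  rw [Finset.filter_insert]
  split_ifs
  · exact Finset.card_insert_le _ _
  · exact le_rfl

theorem outDeg_erase_add {e : V × V} {H : Finset (V × V)} (he : e ∈ H) (v : V) :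
    (outDeg (H.erase e) v + if e.1 = v then 1 else 0) = outDeg H v := by
  unfold outDeg
  rw [Finset.filter_erase]
  split_ifs with h
  · exact Finset.card_erase_add_one (Finset.mem_filter.2 ⟨he, h⟩)
  · rw [Finset.erase_eq_of_notMem (by simp [h])]
    rfl

theorem outDeg_le_of_subset_redirect {H H' : Finset (V × V)} {a b a' b' c c' : V}
    (hab : (a, b) ∈ H) (hab' : (a', b') ∈ H) (hne : (a, b) ≠ (a', b'))
    (h : H' ⊆ insert (a, c) (insert (a', c') ((H.erase (a, b)).erase (a', b')))) (v : V) :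
    outDeg H' v ≤ outDeg H v := by
  set W := (H.erase (a, b)).erase (a', b')
  have hab'' : (a', b') ∈ H.erase (a, b) := Finset.mem_erase.2 ⟨hne.symm, hab'⟩
  calc outDeg H' v ≤ outDeg (insert (a, c) (insert (a', c') W)) v := outDeg_mono h v
    _ ≤ outDeg W v + (if a' = v then 1 else 0) + (if a = v then 1 else 0) :=
      (outDeg_insert_le _ _ v).trans (Nat.add_le_add_right (outDeg_insert_le _ _ v) _)
    _ = outDeg H v := by rw [outDeg_erase_add hab'', outDeg_erase_add hab]

section Covers

def coverEdges (K : Finset (V × V × List V)) (Q : V × V × List V → List V) : Finset (V × V) :=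
  K.biUnion fun k => (listEdges (Q k)).toFinset

def commoditiesUsing (K : Finset (V × V × List V)) (Q : V × V × List V → List V) (e : V × V) :
    Finset (V × V × List V) :=
  K.filter fun k => e ∈ listEdges (Q k)

def IsFeasibleCover (F : Finset V) (K : Finset (V × V × List V)) (T : ℕ)
    (Q : V × V × List V → List V) : Prop :=
  IsWitnessFamily K Q ∧ ∀ v, v ∉ F → outDeg (coverEdges K Q) v ≤ T

variable {F : Finset V} {K : Finset (V × V × List V)} {T : ℕ} {Q : V × V × List V → List V}

theorem mem_coverEdges {e : V × V} : e ∈ coverEdges K Q ↔ ∃ k ∈ K, e ∈ listEdges (Q k) := by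
  simp [coverEdges]

theorem mem_commoditiesUsing {e : V × V} {k : V × V × List V} :
    k ∈ commoditiesUsing K Q e ↔ k ∈ K ∧ e ∈ listEdges (Q k) :=
  Finset.mem_filter

theorem exists_isFeasibleCover {D H : Finset (V × V)} (hH : SMDSolution D F K T H) :
    ∃ Q, IsFeasibleCover F K T Q := by
  choose! Q hQpath hQsub using hH.2.2
  refine ⟨Q, fun k hk => ⟨hQsub k hk, (hQpath k hk).2.2.1, (hQpath k hk).2.2.2⟩, fun v hv => ?_⟩
  refine (outDeg_mono (fun e he => ?_) v).trans (hH.2.1 v hv)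
  obtain ⟨k, hk, hek⟩ := mem_coverEdges.1 he
  exact isChain_iff_forall_mem_listEdges.1 (hQpath k hk).1 e hek

theorem exists_redirected_path {a b a' b' : V} (hne : (a, b) ≠ (a', b'))
    (hS : commoditiesUsing K Q (a, b) = commoditiesUsing K Q (a', b'))
    {k : V × V × List V} (hk : k ∈ K) (hnodup : (Q k).Nodup) :
    ∃ l, (l.Sublist (Q k) ∧ l.head? = (Q k).head? ∧ l.getLast? = (Q k).getLast?) ∧
      l.length ≤ (Q k).length ∧ (k ∈ commoditiesUsing K Q (a, b) → l.length < (Q k).length) ∧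
      ∀ f ∈ listEdges l,
        f ∈ insert (a, b') (insert (a', b) (((coverEdges K Q).erase (a, b)).erase (a', b'))) := by
  by_cases hkS : k ∈ commoditiesUsing K Q (a, b)
  · have hab := (mem_commoditiesUsing.1 hkS).2
    have hab' := (mem_commoditiesUsing.1 (hS ▸ hkS)).2
    obtain ⟨l, hsub, hhead, hlast, hlen, hedges⟩ := hnodup.exists_redirect hab hab' hne
    refine ⟨l, ⟨hsub, hhead, hlast⟩, hlen.le, fun _ => hlen, fun f hf => ?_⟩
    obtain ⟨hfab, hfab', hf | hf | hf⟩ := hedges f hf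
    · simp [hfab, hfab', mem_coverEdges.2 ⟨k, hk, hf⟩]
    · simp [hf]
    · simp [hf]
  · have hkS' : k ∉ commoditiesUsing K Q (a', b') := hS ▸ hkS
    refine ⟨Q k, ⟨List.Sublist.refl _, rfl, rfl⟩, le_rfl, fun h => absurd h hkS, fun f hf => ?_⟩
    have hfab : f ≠ (a, b) := by rintro rfl; exact hkS (mem_commoditiesUsing.2 ⟨hk, hf⟩)
    have hfab' : f ≠ (a', b') := by rintro rfl; exact hkS' (mem_commoditiesUsing.2 ⟨hk, hf⟩)
    simp [hfab, hfab', mem_coverEdges.2 ⟨k, hk, hf⟩]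

theorem IsFeasibleCover.exists_shorter (hQ : IsFeasibleCover F K T Q)
    (hnodup : ∀ k ∈ K, (Q k).Nodup) {e e' : V × V} (he : e ∈ coverEdges K Q) (hne : e ≠ e')
    (hS : commoditiesUsing K Q e = commoditiesUsing K Q e') :
    ∃ R, IsFeasibleCover F K T R ∧ totalLength K R < totalLength K Q := by
  obtain ⟨a, b⟩ := e
  obtain ⟨a', b'⟩ := e'
  choose! R hRsub hRle hRlt hRedges using
    fun k hk => exists_redirected_path hne hS hk (hnodup k hk)
  obtain ⟨k₀, hk₀, hk₀e⟩ := mem_coverEdges.1 he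
  have hk₀S : k₀ ∈ commoditiesUsing K Q (a, b) := mem_commoditiesUsing.2 ⟨hk₀, hk₀e⟩
  have he' : (a', b') ∈ coverEdges K Q :=
    mem_coverEdges.2 ⟨k₀, hk₀, (mem_commoditiesUsing.1 (hS ▸ hk₀S)).2⟩
  have hRU : coverEdges K R ⊆
      insert (a, b') (insert (a', b) (((coverEdges K Q).erase (a, b)).erase (a', b'))) :=
    fun f hf => by
      obtain ⟨k, hk, hf⟩ := mem_coverEdges.1 hf
      exact hRedges k hk f hf
  refine ⟨R, ⟨hQ.1.of_sublist hRsub, fun v hv => ?_⟩,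
    Finset.sum_lt_sum hRle ⟨k₀, hk₀, hRlt k₀ hk₀ hk₀S⟩⟩
  exact (outDeg_le_of_subset_redirect he he' hne hRU v).trans (hQ.2 v hv)

theorem card_coverEdges_le (hinj : Set.InjOn (commoditiesUsing K Q) (coverEdges K Q)) :
    (coverEdges K Q).card ≤ 2 ^ K.card - 1 := by
  have hmaps : Set.MapsTo (commoditiesUsing K Q) (coverEdges K Q) (K.powerset.erase ∅) :=
    fun e he => by
      obtain ⟨k, hk, hek⟩ := mem_coverEdges.1 he
      exact Finset.mem_erase.2 ⟨Finset.ne_empty_of_mem (mem_commoditiesUsing.2 ⟨hk, hek⟩),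
        Finset.mem_powerset.2 (Finset.filter_subset _ _)⟩
  simpa [Finset.card_erase_of_mem, Finset.card_powerset] using
    Finset.card_le_card_of_injOn _ hmaps hinj

theorem card_biUnion_toFinset_le (hhead : ∀ k ∈ K, (Q k).head? = some k.1) :
    (K.biUnion fun k => (Q k).toFinset).card ≤ K.card + (coverEdges K Q).card := by
  have hsub : (K.biUnion fun k => (Q k).toFinset) ⊆
      K.image Prod.fst ∪ (coverEdges K Q).image Prod.snd := by
    intro v hv
    obtain ⟨k, hk, hv⟩ := Finset.mem_biUnion.1 hv
    rw [List.mem_toFinset] at hv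
    by_cases hvs : (Q k).head? = some v
    · rw [hhead k hk, Option.some.injEq] at hvs
      exact Finset.mem_union_left _ (Finset.mem_image.2 ⟨k, hk, hvs⟩)
    · obtain ⟨u, hu⟩ := exists_mem_listEdges_of_ne_head hv hvs
      exact Finset.mem_union_right _
        (Finset.mem_image.2 ⟨(u, v), mem_coverEdges.2 ⟨k, hk, hu⟩, rfl⟩)
  calc _ ≤ _ := Finset.card_le_card hsub
    _ ≤ _ := Finset.card_union_le _ _
    _ ≤ _ := add_le_add Finset.card_image_le Finset.card_image_le

theorem IsFeasibleCover.smdSolution {D : Finset (V × V)} (hK : ValidSPP D K)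
    (hQ : IsFeasibleCover F K T Q) : SMDSolution D F K T (coverEdges K Q) := by
  refine ⟨fun ⟨x, y⟩ he => ?_, hQ.2, fun k hk => ⟨Q k, ⟨?_, (hQ.1 k hk).1.nodup (hK k hk).2.1,
    (hQ.1 k hk).2.1, (hQ.1 k hk).2.2⟩, (hQ.1 k hk).1⟩⟩
  · obtain ⟨k, hk, hek⟩ := mem_coverEdges.1 he
    exact tcAdj_of_pair_sublist (hK k hk)
      ((pair_sublist_of_mem_listEdges hek).trans (hQ.1 k hk).1)
  · exact isChain_iff_forall_mem_listEdges.2 fun e he => mem_coverEdges.2 ⟨k, hk, he⟩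

end Covers

theorem smdspp_small_solution_path_cover_general {V : Type*} [DecidableEq V]
    (D : Finset (V × V)) (F : Finset V) (K : Finset (V × V × List V)) (T : ℕ)
    (hKvalid : ValidSPP D K)
    (hyes : ∃ H : Finset (V × V), SMDSolution D F K T H) :
    ∃ Q : V × V × List V → List V,
      (∀ k ∈ K, (Q k).Sublist k.2.2 ∧ (Q k).head? = some k.1 ∧
        (Q k).getLast? = some k.2.1) ∧
      SMDSolution D F K T (K.biUnion fun k => (listEdges (Q k)).toFinset) ∧
      (K.biUnion fun k => (Q k).toFinset).card ≤ 2 ^ K.card + K.card := by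
  obtain ⟨H, hH⟩ := hyes
  obtain ⟨Q, hQ, hmin⟩ := (InvImage.wf (totalLength K) wellFounded_lt).has_min
    {Q | IsFeasibleCover F K T Q} (exists_isFeasibleCover hH)
  have hnodup : ∀ k ∈ K, (Q k).Nodup := fun k hk => (hQ.1 k hk).1.nodup (hKvalid k hk).2.1
  have hinj : Set.InjOn (commoditiesUsing K Q) (coverEdges K Q) := fun e he e' _ hS => by
    by_contra hne
    obtain ⟨R, hR, hlt⟩ := hQ.exists_shorter hnodup he hne hS
    exact hmin R hR hlt
  refine ⟨Q, hQ.1, hQ.smdSolution hKvalid, ?_⟩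
  calc _ ≤ K.card + (coverEdges K Q).card := card_biUnion_toFinset_le fun k hk => (hQ.1 k hk).2.1
    _ ≤ K.card + (2 ^ K.card - 1) := Nat.add_le_add_left (card_coverEdges_le hinj) _
    _ ≤ 2 ^ K.card + K.card := by generalize 2 ^ K.card = n; omega

/-- Every YES-instance `(D,F,K,T)` of SMD-SPP has a solution
path cover (a family `Q` of witness paths, one per routed commodity `(s,t,P)`:
a directed `s`-`t`-path in `T(P)`, i.e. a sublist of `P` from `s` to `t`, whose
union is a solution graph) whose union contains at most `2^|K| + |K|` distinct
vertices. -/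
theorem smdspp_small_solution_path_cover {V : Type*} [Fintype V] [DecidableEq V]
    (D : Finset (V × V)) (F : Finset V) (K : Finset (V × V × List V)) (T : ℕ)
    (hD : IsDigraph D) (hKvalid : ValidSPP D K)
    (hyes : ∃ H : Finset (V × V), SMDSolution D F K T H) :
    ∃ Q : V × V × List V → List V,
      (∀ k ∈ K, (Q k).Sublist k.2.2 ∧ (Q k).head? = some k.1 ∧
        (Q k).getLast? = some k.2.1) ∧
      SMDSolution D F K T (K.biUnion fun k => (listEdges (Q k)).toFinset) ∧
      (K.biUnion fun k => (Q k).toFinset).card ≤ 2 ^ K.card + K.card :=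
  smdspp_small_solution_path_cover_general D F K T hKvalid hyes
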